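/- Fix ε > 0 and assume Hypotheses 1, 2 and 3. If (U, b) and (V, c) are two solutions of the ε-penalized optimal-stopping master equation with U and V of class C^1, then U = V; moreover, U is a monotone map on O_d. -/

import Mathlib

open scoped RealInnerProductSpace
noncomputable section

/-- `ℝ^d` with the Euclidean inner product. -/
abbrev Euc (d : ℕ) := EuclideanSpace ℝ (Fin d)

/-- The positive orthant `O_d = (ℝ≥0)^d`. -/
def Od (d : ℕ) : Set (Euc d) := {x | ∀ i, 0 ≤ x i}

/-- `B_R = {x ∈ O_d : x_1 + ... + x_d ≤ R}`. -/
def Ball1 (d : ℕ) (R : ℝ) : Set (Euc d) := {x | x ∈ Od d ∧ ∑ i, x i ≤ R}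

/-- The drift vector `(1/ε) b(x) ∗ x` (componentwise product) of the penalized problem. -/
def penDrift (d : ℕ) (ε : ℝ) (b : Euc d → Fin d → ℝ) (x : Euc d) : Euc d :=
  WithLp.toLp 2 (fun j => (1/ε) * (b x j * x j))

/-- A pair `(U, b)` is a solution of the ε-penalized optimal-stopping master equation:
`b` is a selection of the subdifferential of `β(t) = max(t,0)` along `U`, and
`r Uⁱ + (1/ε) β(Uⁱ) + ⟨(1/ε) b∗x + F(x,U), ∇ₓUⁱ⟩ + λ(Uⁱ − (T*U(Tx))ⁱ) = Gⁱ(x,U)` on `O_d`. -/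
def IsPenalizedSolOS (d : ℕ) (F G : Euc d → Euc d → Euc d) (r lam ε : ℝ)
    (T : Euc d →L[ℝ] Euc d) (U : Euc d → Euc d) (b : Euc d → Fin d → ℝ) : Prop :=
  ContDiff ℝ 1 U ∧
  (∀ x ∈ Od d, ∀ i, b x i ∈ Set.Icc (0:ℝ) 1 ∧
    (U x i < 0 → b x i = 0) ∧ (0 < U x i → b x i = 1)) ∧
  ∀ x ∈ Od d, ∀ i,
    r * U x i + (1/ε) * max (U x i) 0
      + fderiv ℝ (fun z : Euc d => U z i) x (penDrift d ε b x + F x (U x))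
      + lam * (U x i - ContinuousLinearMap.adjoint T (U (T x)) i)
      = G x (U x) i

/-!
For two solutions `U`, `V` minimise `Φ(x, y) = ⟪U x - V y, x - y⟫` over the compact set
`B_R × B_R`, `R ≥ R₀`. Hypotheses 1 and 2 make the backward characteristic directions
`-((1/ε) b∗x + F)` point into `B_R`, so the first-order conditions at the minimiser control the
transport terms of both equations. Testing the two equations against `x - y` and subtracting,
the penalty terms have a sign by monotonicity of `∂β`, the nonlocal terms by
`Φ(Tx, Ty) ≥ Φ(x, y)`, and the remaining terms by Hypothesis 3; this leaves `r Φ ≥ 0` at the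
minimum, hence everywhere. With `V = U` this is monotonicity of `U`; letting `y → x` along the
coordinate directions gives `U ≤ V`, and by symmetry `U = V`.
-/

open Filter Topology

variable {d : ℕ}

lemma fderiv_coord_apply {E : Type*} [NormedAddCommGroup E] [NormedSpace ℝ E]
    {U : E → Euc d} {x : E} (hU : DifferentiableAt ℝ U x) (i : Fin d) (w : E) :
    fderiv ℝ (fun z => U z i) x w = fderiv ℝ U x w i := by
  have h : HasFDerivAt (fun z => U z i) ((PiLp.proj 2 _ i).comp (fderiv ℝ U x)) x :=
    (PiLp.hasFDerivAt_apply (𝕜 := ℝ) 2 (U x) i).comp x hU.hasFDerivAt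
  rw [h.fderiv]
  rfl

lemma inner_euc_eq_sum (u w : Euc d) : ⟪u, w⟫ = ∑ i, u i * w i := by
  simp [PiLp.inner_apply, mul_comm]

lemma isCompact_Ball1 (d : ℕ) (R : ℝ) : IsCompact (Ball1 d R) := by
  let K : Set (Fin d → ℝ) := {f | (∀ i, 0 ≤ f i) ∧ ∑ i, f i ≤ R}
  have hclosed : IsClosed K := by
    simp only [K, Set.ofPred_and, Set.ofPred_forall]
    exact (isClosed_iInter fun i => isClosed_le continuous_const (continuous_apply i)).inter
      (isClosed_le (continuous_finsetSum _ fun i _ => continuous_apply i) continuous_const)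
  have hK : IsCompact K :=
    (isCompact_univ_pi fun _ => isCompact_Icc (a := 0) (b := R)).of_isClosed_subset hclosed
      fun f hf i _ =>
        ⟨hf.1 i, (Finset.single_le_sum (fun j _ => hf.1 j) (Finset.mem_univ i)).trans hf.2⟩
  exact (EuclideanSpace.equiv (Fin d) ℝ).toHomeomorph.isCompact_preimage.2 hK

lemma eventually_nonneg_add_mul {a v : ℝ} (ha : 0 ≤ a) (hv : a = 0 → 0 ≤ v) :
    ∀ᶠ t in 𝓝[>] (0 : ℝ), 0 ≤ a + t * v := by
  rcases ha.eq_or_lt with rfl | ha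
  · filter_upwards [self_mem_nhdsWithin] with t (ht : 0 < t)
    simpa using mul_nonneg ht.le (hv rfl)
  · have hlim : Tendsto (fun t : ℝ => a + t * v) (𝓝[>] 0) (𝓝 a) :=
      ((continuous_const.add (continuous_id.mul continuous_const)).tendsto' 0 a
        (by simp)).mono_left nhdsWithin_le_nhds
    exact (hlim.eventually_const_lt ha).mono fun t ht => ht.le

lemma eventually_add_smul_mem_Ball1 {R : ℝ} {x v : Euc d} (hx : x ∈ Ball1 d R)
    (hv : ∀ i, x i = 0 → 0 ≤ v i) (hsum : ∑ i, x i = R → ∑ i, v i ≤ 0) :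
    ∀ᶠ t in 𝓝[>] (0 : ℝ), x + t • v ∈ Ball1 d R := by
  have hcoord : ∀ᶠ t in 𝓝[>] (0 : ℝ), ∀ i, 0 ≤ x i + t * v i :=
    eventually_all.2 fun i => eventually_nonneg_add_mul (hx.1 i) (hv i)
  have hmass : ∀ᶠ t in 𝓝[>] (0 : ℝ), 0 ≤ (R - ∑ i, x i) + t * -∑ i, v i :=
    eventually_nonneg_add_mul (sub_nonneg.2 hx.2) fun h => by linarith [hsum (by linarith)]
  filter_upwards [hcoord, hmass] with t hc hm
  refine ⟨fun i => by simpa using hc i, ?_⟩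
  simp only [PiLp.add_apply, PiLp.smul_apply, smul_eq_mul, Finset.sum_add_distrib,
    ← Finset.mul_sum]
  linarith

lemma inner_fderiv_add_inner_nonpos_of_isMinOn {E : Type*} [NormedAddCommGroup E]
    [InnerProductSpace ℝ E] {U : E → E} {S : Set E} {x p q ξ : E} (hU : DifferentiableAt ℝ U x)
    (hmin : IsMinOn (fun z => ⟪U z - p, z - q⟫) S x)
    (hξ : ∀ᶠ t in 𝓝[>] (0 : ℝ), x + t • -ξ ∈ S) :
    ⟪fderiv ℝ U x ξ, x - q⟫ + ⟪U x - p, ξ⟫ ≤ 0 := by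
  have hderiv := (hU.hasFDerivAt.sub_const p).inner ℝ ((hasFDerivAt_id x).sub_const q)
  have := hmin.localize.hasFDerivWithinAt_nonneg hderiv.hasFDerivWithinAt
    (mem_posTangentConeAt_of_frequently_mem hξ.frequently)
  simp only [ContinuousLinearMap.comp_apply, ContinuousLinearMap.prod_apply,
    fderivInnerCLM_apply, map_neg, ContinuousLinearMap.coe_id', id_eq] at this
  linarith

lemma inner_sub_nonpos_of_forall_inner_nonneg {E : Type*} [NormedAddCommGroup E]
    [InnerProductSpace ℝ E] {W Z : E → E} {x e : E} (hZ : ContinuousAt Z x)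
    (h : ∀ t > (0 : ℝ), 0 ≤ ⟪W x - Z (x + t • e), x - (x + t • e)⟫) :
    ⟪W x - Z x, e⟫ ≤ 0 := by
  have hline : Tendsto (fun t : ℝ => x + t • e) (𝓝[>] 0) (𝓝 x) :=
    ((continuous_const.add (continuous_id.smul continuous_const)).tendsto' 0 x
      (by simp)).mono_left nhdsWithin_le_nhds
  refine le_of_tendsto (((hZ.tendsto.comp hline).const_sub (W x)).inner tendsto_const_nhds) ?_
  filter_upwards [self_mem_nhdsWithin] with t (ht : 0 < t)
  have := h t ht
  rw [sub_add_cancel_left, inner_neg_right, inner_smul_right] at this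
  exact nonpos_of_mul_nonpos_right (by simpa using this) ht

lemma mul_sub_le_max_zero_sub_max_zero {u v β : ℝ}
    (hβ : β ∈ Set.Icc (0 : ℝ) 1 ∧ (u < 0 → β = 0) ∧ (0 < u → β = 1)) :
    β * (v - u) ≤ max v 0 - max u 0 := by
  obtain ⟨⟨hβ0, hβ1⟩, hneg, hpos⟩ := hβ
  rcases lt_trichotomy u 0 with hu | rfl | hu
  · simp [hneg hu, max_eq_right hu.le]
  · rcases le_total v 0 with hv | hv
    · simp only [max_eq_right hv, max_self, sub_zero, sub_self]; nlinarith
    · simp only [max_eq_left hv, max_self, sub_zero]; nlinarith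
  · simp only [hpos hu, max_eq_left hu.le, one_mul]; linarith [le_max_left v 0]

section PenalizedSolution

variable {ε r lam : ℝ} {F G : Euc d → Euc d → Euc d} {T : Euc d →L[ℝ] Euc d}
  {U : Euc d → Euc d} {b : Euc d → Fin d → ℝ}

lemma IsPenalizedSolOS.inner_eq (hU : IsPenalizedSolOS d F G r lam ε T U b) {x : Euc d}
    (hx : x ∈ Od d) (w : Euc d) :
    r * ⟪U x, w⟫ + 1 / ε * ∑ i, max (U x i) 0 * w i
      + ⟪fderiv ℝ U x (penDrift d ε b x + F x (U x)), w⟫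
      + lam * (⟪U x, w⟫ - ⟪U (T x), T w⟫) = ⟪G x (U x), w⟫ := by
  have hdiff := hU.1.differentiable one_ne_zero x
  rw [← ContinuousLinearMap.adjoint_inner_left]
  simp only [inner_euc_eq_sum, Finset.mul_sum, ← Finset.sum_sub_distrib, ← Finset.sum_add_distrib]
  refine Finset.sum_congr rfl fun i _ => ?_
  rw [← hU.2.2 x hx i, fderiv_coord_apply hdiff]
  ring

lemma one_div_mul_sum_max_zero_sub_le_inner_penDrift (hε : 0 ≤ ε) {c : Euc d → Fin d → ℝ}
    {a s u v : Euc d} (ha : a ∈ Od d) (hs : s ∈ Od d)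
    (hb : ∀ i, b a i ∈ Set.Icc (0 : ℝ) 1 ∧ (u i < 0 → b a i = 0) ∧ (0 < u i → b a i = 1))
    (hc : ∀ i, c s i ∈ Set.Icc (0 : ℝ) 1 ∧ (v i < 0 → c s i = 0) ∧ (0 < v i → c s i = 1)) :
    1 / ε * (∑ i, max (u i) 0 * (a - s) i - ∑ i, max (v i) 0 * (a - s) i)
      ≤ ⟪u - v, penDrift d ε b a - penDrift d ε c s⟫ := by
  simp only [inner_euc_eq_sum, penDrift, PiLp.sub_apply, ← Finset.sum_sub_distrib, Finset.mul_sum]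
  refine Finset.sum_le_sum fun i _ => ?_
  have hbu := mul_le_mul_of_nonneg_left (mul_sub_le_max_zero_sub_max_zero (v := v i) (hb i)) (ha i)
  have hcv := mul_le_mul_of_nonneg_left (mul_sub_le_max_zero_sub_max_zero (v := u i) (hc i)) (hs i)
  have hε' : 0 ≤ 1 / ε := by positivity
  nlinarith [mul_le_mul_of_nonneg_left (add_le_add hbu hcv) hε']

lemma eventually_add_smul_neg_drift_mem_Ball1 (hε : 0 ≤ ε) {R : ℝ} {x p : Euc d}
    (hx : x ∈ Ball1 d R) (hb : ∀ i, 0 ≤ b x i) (hF0 : ∀ i, x i = 0 → F x p i ≤ 0)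
    (hFsum : ∑ i, x i = R → 0 ≤ ∑ i, F x p i) :
    ∀ᶠ t in 𝓝[>] (0 : ℝ), x + t • -(penDrift d ε b x + F x p) ∈ Ball1 d R := by
  refine eventually_add_smul_mem_Ball1 hx (fun i hi => ?_) fun hR => ?_
  · simpa [penDrift, hi] using hF0 i hi
  · have hpen : 0 ≤ ∑ i, 1 / ε * (b x i * x i) :=
      Finset.sum_nonneg fun i _ => by have := hx.1 i; have := hb i; positivity
    simp only [PiLp.neg_apply, PiLp.add_apply, penDrift, Finset.sum_neg_distrib,
      Finset.sum_add_distrib]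
    linarith [hFsum hR]

end PenalizedSolution

lemma inner_sub_nonneg_of_isMinOn {ε r lam R₀ R : ℝ} {F G : Euc d → Euc d → Euc d}
    {T : Euc d →L[ℝ] Euc d} {U V : Euc d → Euc d} {b c : Euc d → Fin d → ℝ}
    (hε : 0 < ε) (hr : 0 < r) (hlam : 0 ≤ lam)
    (hyp1F : ∀ x ∈ Od d, ∀ p : Euc d, ∀ i, x i = 0 → F x p i ≤ 0)
    (hyp2F : ∀ x ∈ Od d, ∀ p : Euc d, R₀ ≤ ∑ i, x i → 0 ≤ ∑ i, F x p i)
    (hyp2T : ∀ R ≥ R₀, ∀ x ∈ Ball1 d R, T x ∈ Ball1 d R)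
    (hyp3 : ∀ x ∈ Od d, ∀ y ∈ Od d, ∀ p q : Euc d,
      0 ≤ ⟪G x p - G y q, x - y⟫ + ⟪F x p - F y q, p - q⟫)
    (hU : IsPenalizedSolOS d F G r lam ε T U b) (hV : IsPenalizedSolOS d F G r lam ε T V c)
    (hR : R₀ ≤ R) {a s : Euc d} (ha : a ∈ Ball1 d R) (hs : s ∈ Ball1 d R)
    (hmin : IsMinOn (fun p : Euc d × Euc d => ⟪U p.1 - V p.2, p.1 - p.2⟫)
      (Ball1 d R ×ˢ Ball1 d R) (a, s)) :
    0 ≤ ⟪U a - V s, a - s⟫ := by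
  have hPU := hU.inner_eq ha.1 (a - s)
  have hPV := hV.inner_eq hs.1 (a - s)
  have hFOCa : ⟪fderiv ℝ U a (penDrift d ε b a + F a (U a)), a - s⟫
      + ⟪U a - V s, penDrift d ε b a + F a (U a)⟫ ≤ 0 := by
    refine inner_fderiv_add_inner_nonpos_of_isMinOn (hU.1.differentiable one_ne_zero a)
      (fun z hz => hmin (Set.mk_mem_prod hz hs)) ?_
    exact eventually_add_smul_neg_drift_mem_Ball1 hε.le ha (fun i => (hU.2.1 a ha.1 i).1.1)
      (hyp1F a ha.1 _) fun h => hyp2F a ha.1 _ (h ▸ hR)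
  have hFOCs : ⟪fderiv ℝ V s (penDrift d ε c s + F s (V s)), s - a⟫
      + ⟪V s - U a, penDrift d ε c s + F s (V s)⟫ ≤ 0 := by
    refine inner_fderiv_add_inner_nonpos_of_isMinOn (S := Ball1 d R)
      (hV.1.differentiable one_ne_zero s) (fun z hz => ?_) ?_
    · have h : ⟪U a - V s, a - s⟫ ≤ ⟪U a - V z, a - z⟫ := hmin (Set.mk_mem_prod ha hz)
      show ⟪V s - U a, s - a⟫ ≤ ⟪V z - U a, z - a⟫
      rwa [← inner_neg_neg, neg_sub, neg_sub, ← inner_neg_neg (V z - U a), neg_sub, neg_sub]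
    exact eventually_add_smul_neg_drift_mem_Ball1 hε.le hs (fun i => (hV.2.1 s hs.1 i).1.1)
      (hyp1F s hs.1 _) fun h => hyp2F s hs.1 _ (h ▸ hR)
  have hT : ⟪U a - V s, a - s⟫ ≤ ⟪U (T a) - V (T s), T a - T s⟫ :=
    hmin (Set.mk_mem_prod (hyp2T R hR a ha) (hyp2T R hR s hs))
  have hmono := hyp3 a ha.1 s hs.1 (U a) (V s)
  rw [real_inner_comm (U a - V s)] at hmono
  have hpen := one_div_mul_sum_max_zero_sub_le_inner_penDrift hε.le ha.1 hs.1
    (hU.2.1 a ha.1) (hV.2.1 s hs.1)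
  have hlamT := mul_nonneg hlam (sub_nonneg.2 hT)
  refine nonneg_of_mul_nonneg_right ?_ hr
  simp only [inner_add_right, inner_sub_left, inner_sub_right, map_sub]
    at hPU hPV hFOCa hFOCs hmono hpen hlamT ⊢
  linarith

lemma inner_sub_nonneg_of_isPenalizedSolOS {ε r lam R₀ : ℝ} {F G : Euc d → Euc d → Euc d}
    {T : Euc d →L[ℝ] Euc d} {U V : Euc d → Euc d} {b c : Euc d → Fin d → ℝ}
    (hε : 0 < ε) (hr : 0 < r) (hlam : 0 ≤ lam)
    (hyp1F : ∀ x ∈ Od d, ∀ p : Euc d, ∀ i, x i = 0 → F x p i ≤ 0)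
    (hyp2F : ∀ x ∈ Od d, ∀ p : Euc d, R₀ ≤ ∑ i, x i → 0 ≤ ∑ i, F x p i)
    (hyp2T : ∀ R ≥ R₀, ∀ x ∈ Ball1 d R, T x ∈ Ball1 d R)
    (hyp3 : ∀ x ∈ Od d, ∀ y ∈ Od d, ∀ p q : Euc d,
      0 ≤ ⟪G x p - G y q, x - y⟫ + ⟪F x p - F y q, p - q⟫)
    (hU : IsPenalizedSolOS d F G r lam ε T U b) (hV : IsPenalizedSolOS d F G r lam ε T V c) :
    ∀ x ∈ Od d, ∀ y ∈ Od d, 0 ≤ ⟪U x - V y, x - y⟫ := by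
  intro x hx y hy
  set R := max R₀ (max (∑ i, x i) (∑ i, y i))
  have hxR : x ∈ Ball1 d R := ⟨hx, le_max_of_le_right (le_max_left _ _)⟩
  have hyR : y ∈ Ball1 d R := ⟨hy, le_max_of_le_right (le_max_right _ _)⟩
  have hcont : Continuous fun p : Euc d × Euc d => ⟪U p.1 - V p.2, p.1 - p.2⟫ :=
    ((hU.1.continuous.comp continuous_fst).sub (hV.1.continuous.comp continuous_snd)).inner
      (continuous_fst.sub continuous_snd)
  obtain ⟨⟨a, s⟩, ⟨ha, hs⟩, hmin⟩ :=
    ((isCompact_Ball1 d R).prod (isCompact_Ball1 d R)).exists_isMinOn ⟨(x, y), hxR, hyR⟩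
      hcont.continuousOn
  exact (inner_sub_nonneg_of_isMinOn hε hr hlam hyp1F hyp2F hyp2T hyp3 hU hV (le_max_left _ _)
    ha hs hmin).trans (hmin (Set.mk_mem_prod hxR hyR))

lemma apply_le_of_forall_inner_sub_nonneg {W Z : Euc d → Euc d} (hZ : Continuous Z)
    (h : ∀ x ∈ Od d, ∀ y ∈ Od d, 0 ≤ ⟪W x - Z y, x - y⟫) {x : Euc d} (hx : x ∈ Od d)
    (i : Fin d) : W x i ≤ Z x i := by
  have hmem : ∀ t > (0 : ℝ), x + t • EuclideanSpace.single i 1 ∈ Od d := fun t ht j => by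
    rcases eq_or_ne j i with rfl | hj
    · simpa using add_nonneg (hx j) ht.le
    · simpa [hj] using hx j
  have := inner_sub_nonpos_of_forall_inner_nonneg hZ.continuousAt fun t ht => h x hx _ (hmem t ht)
  simpa [EuclideanSpace.inner_single_right] using this

theorem uniqueness_and_monotonicity_penalized_optimal_stopping_general
    (d : ℕ) (ε : ℝ) (hε : 0 < ε)
    (F G : Euc d → Euc d → Euc d)
    (r lam : ℝ) (hr : 0 < r) (hlam : 0 ≤ lam) (T : Euc d →L[ℝ] Euc d)
    -- Hypothesis 1
    (hyp1F : ∀ x ∈ Od d, ∀ p : Euc d, ∀ i, x i = 0 → F x p i ≤ 0)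
    -- Hypothesis 2
    (R₀ : ℝ)
    (hyp2F : ∀ x ∈ Od d, ∀ p : Euc d, R₀ ≤ ∑ i, x i → 0 ≤ ∑ i, F x p i)
    (hyp2T : ∀ R ≥ R₀, ∀ x ∈ Ball1 d R, T x ∈ Ball1 d R)
    -- Hypothesis 3
    (hyp3 : ∀ x ∈ Od d, ∀ y ∈ Od d, ∀ p q : Euc d,
      0 ≤ ⟪G x p - G y q, x - y⟫ + ⟪F x p - F y q, p - q⟫)
    (U V : Euc d → Euc d) (b c : Euc d → Fin d → ℝ)
    (hU : IsPenalizedSolOS d F G r lam ε T U b)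
    (hV : IsPenalizedSolOS d F G r lam ε T V c) :
    (∀ x ∈ Od d, U x = V x) ∧
    (∀ x ∈ Od d, ∀ y ∈ Od d, 0 ≤ ⟪U x - U y, x - y⟫) := by
  have hUV := inner_sub_nonneg_of_isPenalizedSolOS hε hr hlam hyp1F hyp2F hyp2T hyp3 hU hV
  have hVU := inner_sub_nonneg_of_isPenalizedSolOS hε hr hlam hyp1F hyp2F hyp2T hyp3 hV hU
  refine ⟨fun x hx => ?_,
    inner_sub_nonneg_of_isPenalizedSolOS hε hr hlam hyp1F hyp2F hyp2T hyp3 hU hU⟩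
  ext i
  exact le_antisymm (apply_le_of_forall_inner_sub_nonneg hV.1.continuous hUV hx i)
    (apply_le_of_forall_inner_sub_nonneg hU.1.continuous hVU hx i)

/-- Proposition 3.1: under Hypotheses 1-3, there is at most one C¹ solution of the ε-penalized
optimal-stopping master equation, and it is a monotone map. -/
theorem uniqueness_and_monotonicity_penalized_optimal_stopping
    (d : ℕ) (hd : 1 ≤ d) (ε : ℝ) (hε : 0 < ε)
    (F G : Euc d → Euc d → Euc d)
    (hFc : Continuous fun q : Euc d × Euc d => F q.1 q.2)
    (hGc : Continuous fun q : Euc d × Euc d => G q.1 q.2)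
    (r lam : ℝ) (hr : 0 < r) (hlam : 0 ≤ lam) (T : Euc d →L[ℝ] Euc d)
    -- Hypothesis 1
    (hyp1F : ∀ x ∈ Od d, ∀ p : Euc d, ∀ i, x i = 0 → F x p i ≤ 0)
    (hyp1T : ∀ x ∈ Od d, T x ∈ Od d)
    -- Hypothesis 2
    (R₀ : ℝ) (hR₀ : 0 < R₀)
    (hyp2F : ∀ x ∈ Od d, ∀ p : Euc d, R₀ ≤ ∑ i, x i → 0 ≤ ∑ i, F x p i)
    (hyp2T : ∀ R ≥ R₀, ∀ x ∈ Ball1 d R, T x ∈ Ball1 d R)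
    -- Hypothesis 3
    (hyp3 : ∀ x ∈ Od d, ∀ y ∈ Od d, ∀ p q : Euc d,
      0 ≤ ⟪G x p - G y q, x - y⟫ + ⟪F x p - F y q, p - q⟫)
    (U V : Euc d → Euc d) (b c : Euc d → Fin d → ℝ)
    (hU : IsPenalizedSolOS d F G r lam ε T U b)
    (hV : IsPenalizedSolOS d F G r lam ε T V c) :
    (∀ x ∈ Od d, U x = V x) ∧
    (∀ x ∈ Od d, ∀ y ∈ Od d, 0 ≤ ⟪U x - U y, x - y⟫) :=
  uniqueness_and_monotonicity_penalized_optimal_stopping_general d ε hε F G r lam hr hlam T hyp1F R₀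
    hyp2F hyp2T hyp3 U V b c hU hV
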